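/- arXiv:1904.12992 — 2 statements merged into one kernel-verified Lean document; each statement's English description precedes it below -/
import Mathlib

section
/- Let N ≥ 1 and let τ_0 < τ_1 < ... < τ_N be real numbers. Let B_0,...,B_N be a Case-(a) Birkhoff basis for these nodes, and define the N×N matrices D_a := (L_j'(τ_i))_{1≤i,j≤N} and B_a := (B_j(τ_i))_{1≤i,j≤N}. Then B_a is invertible and its inverse is D_a; in particular B_a · D_a = I_N as well as D_a · B_a = I_N. -/
/-!
Expanding `B_k` (k ≥ 1) in the Lagrange basis and differentiating gives
`B_k'(τ_i) = Σ_j B_k(τ_j) L_j'(τ_i)`. The term `j = 0` vanishes because `B_k(τ_0) = 0`, and for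
`i ≥ 1` the left side is `δ_ik`, so `D_a * B_a = I`; a one-sided inverse of a square matrix is
two-sided.
-/

open Polynomial Matrix

section LagrangeBasis

variable {R ι : Type*} [CommRing R] [IsDomain R] [Fintype ι] [DecidableEq ι]
  {τ : ι → R} {L : ι → R[X]} {n : ℕ}

theorem eq_sum_C_eval_mul_of_eval_eq_ite (hτ : Function.Injective τ)
    (hn : n < Fintype.card ι) (hLdeg : ∀ j, (L j).natDegree ≤ n)
    (hL : ∀ i j, (L j).eval (τ i) = if i = j then 1 else 0)
    {p : R[X]} (hp : p.natDegree ≤ n) :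
    p = ∑ j, C (p.eval (τ j)) * L j := by
  refine eq_of_natDegree_lt_card_of_eval_eq _ _ hτ (fun i => ?_) ?_
  · simp [eval_finsetSum, hL]
  · refine max_lt (hp.trans_lt hn) ((natDegree_sum_le_of_forall_le _ _ fun j _ => ?_).trans_lt hn)
    exact (natDegree_C_mul_le _ _).trans (hLdeg j)

theorem eval_derivative_eq_sum_of_eval_eq_ite (hτ : Function.Injective τ)
    (hn : n < Fintype.card ι) (hLdeg : ∀ j, (L j).natDegree ≤ n)
    (hL : ∀ i j, (L j).eval (τ i) = if i = j then 1 else 0)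
    {p : R[X]} (hp : p.natDegree ≤ n) (x : R) :
    (derivative p).eval x = ∑ j, p.eval (τ j) * (derivative (L j)).eval x := by
  conv_lhs => rw [eq_sum_C_eval_mul_of_eval_eq_ite hτ hn hLdeg hL hp]
  simp [eval_finsetSum]

end LagrangeBasis

theorem birkhoff_case_a_Ba_inv_eq_Da_general
    (N : ℕ) (τ : Fin (N + 1) → ℝ) (hτ : StrictMono τ)
    (L B : Fin (N + 1) → Polynomial ℝ)
    (hLdeg : ∀ j, (L j).natDegree ≤ N)
    (hL : ∀ i j, (L j).eval (τ i) = if i = j then 1 else 0)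
    (hBdeg : ∀ j, (B j).natDegree ≤ N)
    (hBj0 : ∀ j : Fin N, (B j.succ).eval (τ 0) = 0)
    (hBj' : ∀ i j : Fin N,
      (derivative (B j.succ)).eval (τ i.succ) = if i = j then 1 else 0) :
    IsUnit (Matrix.of fun i j : Fin N => (B j.succ).eval (τ i.succ)) ∧
    (Matrix.of fun i j : Fin N => (B j.succ).eval (τ i.succ))⁻¹ =
      (Matrix.of fun i j : Fin N => (derivative (L j.succ)).eval (τ i.succ)) ∧
    (Matrix.of fun i j : Fin N => (B j.succ).eval (τ i.succ)) *
      (Matrix.of fun i j : Fin N => (derivative (L j.succ)).eval (τ i.succ)) = 1 ∧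
    (Matrix.of fun i j : Fin N => (derivative (L j.succ)).eval (τ i.succ)) *
      (Matrix.of fun i j : Fin N => (B j.succ).eval (τ i.succ)) = 1 := by
  set Ba : Matrix (Fin N) (Fin N) ℝ := Matrix.of fun i j => (B j.succ).eval (τ i.succ)
  set Da : Matrix (Fin N) (Fin N) ℝ := Matrix.of fun i j => (derivative (L j.succ)).eval (τ i.succ)
  have hDB : Da * Ba = 1 := by
    ext i k
    have hexpand := eval_derivative_eq_sum_of_eval_eq_ite hτ.injective (by simp) hLdeg hL
      (hBdeg k.succ) (τ i.succ)
    rw [hBj' i k, Fin.sum_univ_succ, hBj0, zero_mul, zero_add] at hexpand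
    simp only [Da, Ba, mul_apply, one_apply, of_apply, hexpand, mul_comm]
  have hBD : Ba * Da = 1 := mul_eq_one_comm.mp hDB
  exact ⟨⟨⟨Ba, Da, hBD, hDB⟩, rfl⟩, inv_eq_left_inv hDB, hBD, hDB⟩

/-- Case (a): the Birkhoff matrix `B_a := (B_j(τ_i))_{1≤i,j≤N}` is invertible
with inverse the differentiation matrix `D_a := (L_j'(τ_i))_{1≤i,j≤N}`;
in particular `B_a * D_a = I_N` as well as `D_a * B_a = I_N`. -/
theorem birkhoff_case_a_Ba_inv_eq_Da
    (N : ℕ) (hN : 1 ≤ N) (τ : Fin (N + 1) → ℝ) (hτ : StrictMono τ)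
    (L B : Fin (N + 1) → Polynomial ℝ)
    (hLdeg : ∀ j, (L j).natDegree ≤ N)
    (hL : ∀ i j, (L j).eval (τ i) = if i = j then 1 else 0)
    (hBdeg : ∀ j, (B j).natDegree ≤ N)
    (hB00 : (B 0).eval (τ 0) = 1)
    (hBj0 : ∀ j : Fin N, (B j.succ).eval (τ 0) = 0)
    (hB0' : ∀ i : Fin N, (derivative (B 0)).eval (τ i.succ) = 0)
    (hBj' : ∀ i j : Fin N,
      (derivative (B j.succ)).eval (τ i.succ) = if i = j then 1 else 0) :
    IsUnit (Matrix.of fun i j : Fin N => (B j.succ).eval (τ i.succ)) ∧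
    (Matrix.of fun i j : Fin N => (B j.succ).eval (τ i.succ))⁻¹ =
      (Matrix.of fun i j : Fin N => (derivative (L j.succ)).eval (τ i.succ)) ∧
    (Matrix.of fun i j : Fin N => (B j.succ).eval (τ i.succ)) *
      (Matrix.of fun i j : Fin N => (derivative (L j.succ)).eval (τ i.succ)) = 1 ∧
    (Matrix.of fun i j : Fin N => (derivative (L j.succ)).eval (τ i.succ)) *
      (Matrix.of fun i j : Fin N => (B j.succ).eval (τ i.succ)) = 1 :=
  birkhoff_case_a_Ba_inv_eq_Da_general N τ hτ L B hLdeg hL hBdeg hBj0 hBj'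
end

section
/- Let N ≥ 1 and let τ_0 < τ_1 < ... < τ_N be real numbers. For any real numbers c, d_1,...,d_N there exists a unique real polynomial p of degree ≤ N such that p(τ_0) = c and p'(τ_j) = d_j for j = 1,...,N. -/
/-!
The map sending a polynomial of degree `≤ N` to `(p(x₀), p'(x₁), …, p'(x_N))` is linear between
spaces of dimension `N + 1`, so it suffices that it is injective. If all these values vanish, then
`p'` has degree `< N` and `N` distinct roots, so `p' = 0`; hence `p` is constant, and `p(x₀) = 0`
forces `p = 0`.
-/

open Polynomial

namespace Polynomial

theorem eq_zero_of_eval_eq_zero_of_derivative_eval_eq_zero {R : Type*} [CommRing R] [IsDomain R]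
    [IsAddTorsionFree R] {N : ℕ} {p : R[X]} (hp : p.natDegree ≤ N) {x₀ : R} {x : Fin N → R}
    (hx : Function.Injective x) (h₀ : p.eval x₀ = 0) (h : ∀ j, (derivative p).eval (x j) = 0) :
    p = 0 := by
  have hderiv : derivative p = 0 := by
    rcases eq_or_ne p.natDegree 0 with hdeg | hdeg
    · exact derivative_eq_zero.mpr hdeg
    · refine eq_zero_of_natDegree_lt_card_of_eval_eq_zero _ hx h ?_
      simpa using (natDegree_derivative_lt hdeg).trans_le hp
  rw [eq_C_of_derivative_eq_zero hderiv] at h₀ ⊢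
  rw [eval_C] at h₀
  rw [h₀, C_0]

section BirkhoffEval

variable {R : Type*} [CommRing R] {N : ℕ}

noncomputable def birkhoffEval (x₀ : R) (x : Fin N → R) : R[X] →ₗ[R] Fin (N + 1) → R :=
  LinearMap.pi (Fin.cons (leval x₀) fun j => leval (x j) ∘ₗ derivative)

theorem birkhoffEval_eq_cons_iff (x₀ : R) (x : Fin N → R) (p : R[X]) (c : R) (d : Fin N → R) :
    birkhoffEval x₀ x p = Fin.cons c d ↔
      p.eval x₀ = c ∧ ∀ j, (derivative p).eval (x j) = d j := by
  simp [birkhoffEval, funext_iff, Fin.forall_fin_succ]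

theorem mem_degreeLT_succ_iff {p : R[X]} : p ∈ degreeLT R (N + 1) ↔ p.natDegree ≤ N := by
  rw [degreeLT_succ_eq_degreeLE, mem_degreeLE, natDegree_le_iff_degree_le]

theorem injective_birkhoffEval_domRestrict [IsDomain R] [IsAddTorsionFree R] (x₀ : R)
    {x : Fin N → R} (hx : Function.Injective x) :
    Function.Injective ((birkhoffEval x₀ x).domRestrict (degreeLT R (N + 1))) := by
  rw [← LinearMap.ker_eq_bot, LinearMap.ker_eq_bot']
  rintro ⟨p, hp⟩ hzero
  rw [← Matrix.cons_zero_zero] at hzero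
  have hvanish := (birkhoffEval_eq_cons_iff x₀ x p 0 0).mp hzero
  ext1
  exact eq_zero_of_eval_eq_zero_of_derivative_eval_eq_zero (mem_degreeLT_succ_iff.mp hp) hx
    hvanish.1 hvanish.2

theorem bijective_birkhoffEval_domRestrict {K : Type*} [Field K] [CharZero K] (x₀ : K)
    {x : Fin N → K} (hx : Function.Injective x) :
    Function.Bijective ((birkhoffEval x₀ x).domRestrict (degreeLT K (N + 1))) := by
  have := Module.Finite.equiv (degreeLTEquiv K (N + 1)).symm
  have hinj := injective_birkhoffEval_domRestrict x₀ hx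
  exact ⟨hinj, (LinearMap.injective_iff_surjective_of_finrank_eq_finrank
    (degreeLTEquiv K (N + 1)).finrank_eq).mp hinj⟩

end BirkhoffEval

theorem existsUnique_birkhoff_interpolant {K : Type*} [Field K] [CharZero K] {N : ℕ} (x₀ : K)
    {x : Fin N → K} (hx : Function.Injective x) (c : K) (d : Fin N → K) :
    ∃! p : K[X], p.natDegree ≤ N ∧ p.eval x₀ = c ∧ ∀ j, (derivative p).eval (x j) = d j := by
  obtain ⟨hinj, hsurj⟩ := bijective_birkhoffEval_domRestrict x₀ hx
  obtain ⟨⟨p, hp⟩, hpdata⟩ := hsurj (Fin.cons c d)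
  refine ⟨p, ⟨mem_degreeLT_succ_iff.mp hp, (birkhoffEval_eq_cons_iff x₀ x p c d).mp hpdata⟩, ?_⟩
  rintro q ⟨hq, hqdata⟩
  have hqdata' := (birkhoffEval_eq_cons_iff x₀ x q c d).mpr hqdata
  exact congrArg Subtype.val
    (@hinj ⟨q, mem_degreeLT_succ_iff.mpr hq⟩ ⟨p, hp⟩ (hqdata'.trans hpdata.symm))

end Polynomial

theorem birkhoff_interpolant_case_a_existsUnique_general
    (N : ℕ) (τ : Fin (N + 1) → ℝ) (hτ : StrictMono τ)
    (c : ℝ) (d : Fin N → ℝ) :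
    ∃! p : Polynomial ℝ, p.natDegree ≤ N ∧ p.eval (τ 0) = c ∧
      ∀ j : Fin N, (derivative p).eval (τ j.succ) = d j :=
  existsUnique_birkhoff_interpolant (τ 0) (hτ.injective.comp (Fin.succ_injective N)) c d

/-- Existence and uniqueness of the Case-(a) Birkhoff interpolant: for nodes
`τ₀ < τ₁ < ⋯ < τ_N` and data `c, d₁,…,d_N`, there is a unique polynomial `p`
of degree ≤ N with `p(τ₀) = c` and `p'(τ_j) = d_j` for `j = 1,…,N`. -/
theorem birkhoff_interpolant_case_a_existsUnique
    (N : ℕ) (hN : 1 ≤ N) (τ : Fin (N + 1) → ℝ) (hτ : StrictMono τ)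
    (c : ℝ) (d : Fin N → ℝ) :
    ∃! p : Polynomial ℝ, p.natDegree ≤ N ∧ p.eval (τ 0) = c ∧
      ∀ j : Fin N, (derivative p).eval (τ j.succ) = d j :=
  birkhoff_interpolant_case_a_existsUnique_general N τ hτ c d
end
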